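/- For every n ≥ 1, every 1 ≤ p ≤ 2, every 0 < α < 1/2 and every function f : Ω_n → ℂ, ‖Δ^α f‖_p ≤ K_α ‖ |∇f| ‖_p. -/

import Mathlib

open Real Finset

namespace DiscreteCube

variable {n : ℕ}

/-- The point of the cube `{-1,1}^n` encoded by `x : Fin n → Bool`:
coordinate `j` is `1` if `x j = true` and `-1` otherwise. -/
def sgn (b : Bool) : ℂ := if b then 1 else -1

/-- Negate the `j`-th coordinate. -/
def flip (j : Fin n) (x : Fin n → Bool) : Fin n → Bool :=
  Function.update x j (!(x j))

/-- Discrete partial derivative `(∂_j f)(x) = f(x) - f(x e_j)`. -/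
def pd (j : Fin n) (f : (Fin n → Bool) → ℂ) (x : Fin n → Bool) : ℂ :=
  f x - f (flip j x)

/-- Length of the discrete gradient, `|∇f|(x) = (Σ_j |(∂_j f)(x)|²)^{1/2}`. -/
noncomputable def gradLen (f : (Fin n → Bool) → ℂ) (x : Fin n → Bool) : ℝ :=
  Real.sqrt (∑ j : Fin n, ‖pd j f x‖ ^ 2)

/-- Expectation with respect to the uniform probability on the cube. -/
noncomputable def expect (f : (Fin n → Bool) → ℂ) : ℂ :=
  (∑ x : Fin n → Bool, f x) / 2 ^ n

/-- `L^p` norm (`1 ≤ p < ∞`) of a complex-valued function on the cube. -/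
noncomputable def cLp (p : ℝ) (f : (Fin n → Bool) → ℂ) : ℝ :=
  ((∑ x : Fin n → Bool, ‖f x‖ ^ p) / 2 ^ n) ^ (1 / p)

/-- `L^p` norm (`1 ≤ p < ∞`) of a real-valued function on the cube. -/
noncomputable def rLp (p : ℝ) (g : (Fin n → Bool) → ℝ) : ℝ :=
  ((∑ x : Fin n → Bool, |g x| ^ p) / 2 ^ n) ^ (1 / p)

end DiscreteCube

namespace DiscreteCube

variable {n : ℕ}

/-- Walsh function `ω_A(x) = ∏_{j∈A} x_j`. -/
def walsh (A : Finset (Fin n)) (x : Fin n → Bool) : ℂ := ∏ j ∈ A, sgn (x j)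

/-- Walsh–Fourier coefficient `f̂(A) = 𝔼[f·ω_A]`. -/
noncomputable def coeff (f : (Fin n → Bool) → ℂ) (A : Finset (Fin n)) : ℂ :=
  (∑ x : Fin n → Bool, f x * walsh A x) / 2 ^ n

/-- The operator `cos^{Δ/4}θ`:
`cos^{Δ/4}θ(f) = Σ_A cos^{|A|}θ · f̂(A) ω_A` (the `A = ∅` term is `f̂(∅)`). -/
noncomputable def cosD (θ : ℝ) (f : (Fin n → Bool) → ℂ) (x : Fin n → Bool) : ℂ :=
  ∑ A : Finset (Fin n), (Real.cos θ : ℂ) ^ A.card * coeff f A * walsh A x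

/-- Fractional power of the discrete Laplacian, `Δ^β f = Σ_{A≠∅} (4|A|)^β f̂(A) ω_A`
(for `β > 0` the `A = ∅` term vanishes since `0^β = 0`). -/
noncomputable def deltaPow (β : ℝ) (f : (Fin n → Bool) → ℂ) (x : Fin n → Bool) : ℂ :=
  ∑ A : Finset (Fin n), (((4 * (A.card : ℝ)) ^ β : ℝ) : ℂ) * coeff f A * walsh A x

/-- The constant `K_α = (1/Γ(1−α)) ∫_0^{π/2} (−log cos θ)^{−α} dθ`. -/
noncomputable def Kconst (α : ℝ) : ℝ :=
  (1 / Real.Gamma (1 - α)) * ∫ θ in (0:ℝ)..(Real.pi / 2), (-Real.log (Real.cos θ)) ^ (-α)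

/-- The constant `k_β = (1/Γ(β)) ∫_0^{π/2} (−log cos θ)^{β−1} dθ`. -/
noncomputable def kconst (β : ℝ) : ℝ :=
  (1 / Real.Gamma β) * ∫ θ in (0:ℝ)..(Real.pi / 2), (-Real.log (Real.cos θ)) ^ (β - 1)

end DiscreteCube

/-!
Substituting `t = -log cos θ` gives, for `k ≥ 1`,
`(4k)^α = 4^α / Γ(1-α) · ∫_0^{π/2} (-log cos θ)^{-α} k sin θ cos^{k-1} θ dθ`, so `Δ^α f` is
`4^α / Γ(1-α)` times the integral of `D_θ f = -(d/dθ) cos^{Δ/4}θ f` against `(-log cos θ)^{-α}`.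
As `cos^{Δ/4}θ` is convolution with the product measure whose coordinates have mean `cos θ`,
`⟨g, D_θ f⟩ = ½ Σ_y Σ_j ∂_j f(y) 𝔼_δ[ξ_j(δ) g(yδ)]`, where the centred coordinates `ξ_j` are
orthonormal for that measure. Cauchy–Schwarz in `j`, Bessel's inequality, Hölder and (as `q ≥ 2`)
Jensen bound this by `½ ‖|∇f|‖_p ‖g‖_q`. Duality gives `‖Δ^α f‖_p ≤ 4^α / 2 · K_α ‖|∇f|‖_p`,
and `4^α ≤ 2` for `α < 1/2`.
-/

namespace DiscreteCube

variable {n : ℕ}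

section Duality

variable {ι : Type*} [Fintype ι]

/-- `ℓ^p`–`ℓ^q` duality, tested against `g = conj h · |h| ^ (p - 2)`. -/
theorem rpow_sum_norm_rpow_le_of_forall_re_sum_mul_le {p q : ℝ} (hpq : p.HolderConjugate q)
    (h : ι → ℂ) {A : ℝ} (hA : 0 ≤ A)
    (H : ∀ g : ι → ℂ, (∑ i, g i * h i).re ≤ A * (∑ i, ‖g i‖ ^ q) ^ (1 / q)) :
    (∑ i, ‖h i‖ ^ p) ^ (1 / p) ≤ A := by
  set g : ι → ℂ := fun i => (starRingEnd ℂ) (h i) * (‖h i‖ ^ (p - 2) : ℝ)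
  have hmul : ∀ i, g i * h i = (‖h i‖ ^ p : ℝ) := by
    intro i
    rcases eq_or_ne (h i) 0 with hi | hi
    · simp [g, hi, zero_rpow hpq.pos.ne']
    · have hpos : 0 < ‖h i‖ := norm_pos_iff.mpr hi
      rw [mul_right_comm, Complex.conj_mul', ← Complex.ofReal_pow, ← Complex.ofReal_mul,
        ← rpow_natCast, ← rpow_add hpos]
      norm_num
  have hnorm : ∀ i, ‖g i‖ ^ q = ‖h i‖ ^ p := by
    intro i
    rcases eq_or_ne (h i) 0 with hi | hi
    · simp [g, hi, zero_rpow hpq.pos.ne', zero_rpow hpq.symm.pos.ne']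
    · have hpos : 0 < ‖h i‖ := norm_pos_iff.mpr hi
      rw [norm_mul, Complex.norm_conj, Complex.norm_real, norm_of_nonneg (rpow_nonneg hpos.le _),
        ← rpow_one_add' hpos.le (by linarith [hpq.lt]), ← rpow_mul hpos.le]
      congr 1
      linarith [hpq.sub_one_mul_conj]
  set S := ∑ i, ‖h i‖ ^ p
  have hS : S ≤ A * S ^ (1 / q) := by
    simpa [hmul, hnorm, ← Complex.ofReal_sum] using H g
  have hS0 : 0 ≤ S := Finset.sum_nonneg fun i _ => rpow_nonneg (norm_nonneg (h i)) p
  rcases hS0.eq_or_lt with hS0 | hS0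
  · rw [← hS0, zero_rpow (one_div_pos.mpr hpq.pos).ne']
    exact hA
  · have hsplit : S ^ (1 / p) * S ^ (1 / q) = S := by
      rw [← rpow_add hS0, one_div, one_div, hpq.inv_add_inv_eq_one, rpow_one]
    nth_rewrite 1 [← hsplit] at hS
    exact le_of_mul_le_mul_right hS (rpow_pos_of_pos hS0 _)

/-- `ℓ¹`–`ℓ^∞` duality, tested against `g = conj h / |h|`. -/
theorem sum_norm_le_of_forall_re_sum_mul_le (h : ι → ℂ) {A : ℝ}
    (H : ∀ g : ι → ℂ, (∀ i, ‖g i‖ ≤ 1) → (∑ i, g i * h i).re ≤ A) :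
    ∑ i, ‖h i‖ ≤ A := by
  set g : ι → ℂ := fun i => (starRingEnd ℂ) (h i) / (‖h i‖ : ℂ)
  have hmul : ∀ i, g i * h i = ‖h i‖ := by
    intro i
    rcases eq_or_ne (h i) 0 with hi | hi
    · simp [g, hi]
    · have hpos : (‖h i‖ : ℂ) ≠ 0 := Complex.ofReal_ne_zero.mpr (norm_ne_zero_iff.mpr hi)
      rw [div_mul_eq_mul_div, Complex.conj_mul', sq, mul_div_assoc, div_self hpos, mul_one]
  have hg : ∀ i, ‖g i‖ ≤ 1 := fun i => by
    simp only [g, norm_div, Complex.norm_conj, Complex.norm_real, norm_norm]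
    exact div_self_le_one _
  simpa [hmul, ← Complex.ofReal_sum] using H g hg

end Duality

section Bessel

variable {ι κ : Type*} [Fintype ι] [Fintype κ] [DecidableEq κ]

/-- Bessel's inequality in `L²(W)` for a real orthonormal family `ξ`. -/
lemma sum_norm_sq_weighted_le (W : ι → ℝ) (hW : ∀ i, 0 ≤ W i) (ξ : κ → ι → ℝ)
    (horth : ∀ j k, ∑ i, W i * (ξ j i * ξ k i) = if j = k then 1 else 0) (g : ι → ℂ) :
    ∑ j, ‖∑ i, ((W i * ξ j i : ℝ) : ℂ) * g i‖ ^ 2 ≤ ∑ i, W i * ‖g i‖ ^ 2 := by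
  let e : κ → EuclideanSpace ℂ ι := fun j => WithLp.toLp 2 fun i => ((√(W i) * ξ j i : ℝ) : ℂ)
  let v : EuclideanSpace ℂ ι := WithLp.toLp 2 fun i => ((√(W i) : ℝ) : ℂ) * g i
  have hsqrt : ∀ i, √(W i) * √(W i) = W i := fun i => Real.mul_self_sqrt (hW i)
  have he : Orthonormal ℂ e := by
    rw [orthonormal_iff_ite]
    intro j k
    simp only [e, EuclideanSpace.inner_toLp_toLp, dotProduct, Pi.star_apply,
      Complex.star_def, Complex.conj_ofReal, ← Complex.ofReal_mul, ← Complex.ofReal_sum]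
    rw [Finset.sum_congr rfl fun i _ =>
      show √(W i) * ξ k i * (√(W i) * ξ j i) = W i * (ξ j i * ξ k i) by
        linear_combination (ξ j i * ξ k i) * hsqrt i, horth]
    split_ifs <;> simp
  have hinner : ∀ j, inner ℂ (e j) v = ∑ i, ((W i * ξ j i : ℝ) : ℂ) * g i := by
    intro j
    simp only [e, v, EuclideanSpace.inner_toLp_toLp, dotProduct, Pi.star_apply,
      Complex.star_def, Complex.conj_ofReal]
    refine Finset.sum_congr rfl fun i _ => ?_
    have h := congrArg Complex.ofReal (hsqrt i)
    push_cast at h ⊢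
    rw [← h]
    ring
  have hnorm : ‖v‖ ^ 2 = ∑ i, W i * ‖g i‖ ^ 2 := by
    rw [EuclideanSpace.norm_sq_eq]
    refine Finset.sum_congr rfl fun i _ => ?_
    simp only [v, norm_mul, Complex.norm_real, Real.norm_eq_abs, abs_of_nonneg (Real.sqrt_nonneg _),
      mul_pow, Real.sq_sqrt (hW i)]
  simpa [hinner, hnorm] using he.sum_inner_products_le (s := Finset.univ) v

end Bessel

section Walsh

/-- Coordinatewise product on `{-1,1}^n`, which is `==` on the `Bool` encoding. -/
def cubeMul (x δ : Fin n → Bool) : Fin n → Bool := fun i => x i == δ i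

lemma cubeMul_cubeMul (x δ : Fin n → Bool) : cubeMul (cubeMul x δ) δ = x := by
  funext i
  simp only [cubeMul]
  cases x i <;> cases δ i <;> rfl

lemma sum_comp_cubeMul {M : Type*} [AddCommMonoid M] (δ : Fin n → Bool)
    (F : (Fin n → Bool) → M) : ∑ x, F (cubeMul x δ) = ∑ x, F x :=
  Fintype.sum_bijective (cubeMul · δ)
    (Function.Involutive.bijective fun x => cubeMul_cubeMul x δ) _ _ fun _ => rfl

lemma sgn_mul_sgn (a b : Bool) : sgn a * sgn b = sgn (a == b) := by
  cases a <;> cases b <;> simp [sgn]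

lemma walsh_cubeMul (A : Finset (Fin n)) (x δ : Fin n → Bool) :
    walsh A (cubeMul x δ) = walsh A x * walsh A δ := by
  simp only [walsh, ← Finset.prod_mul_distrib, sgn_mul_sgn, cubeMul]

lemma walsh_flip (A : Finset (Fin n)) (j : Fin n) (x : Fin n → Bool) :
    walsh A (flip j x) = (if j ∈ A then -1 else 1) * walsh A x := by
  have hsgn : ∀ i, sgn (flip j x i) = (if i = j then -1 else 1) * sgn (x i) := by
    intro i
    by_cases hi : i = j
    · subst hi
      simp only [flip, Function.update_self, if_true]
      cases x i <;> simp [sgn]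
    · simp [flip, hi]
  simp only [walsh, hsgn, Finset.prod_mul_distrib, Finset.prod_ite_eq']

lemma sum_walsh_mul_walsh (y x : Fin n → Bool) :
    ∑ A : Finset (Fin n), walsh A y * walsh A x = if y = x then 2 ^ n else 0 := by
  have hprod : ∑ A : Finset (Fin n), walsh A y * walsh A x
      = ∏ j, (1 + sgn (y j) * sgn (x j)) := by
    rw [Finset.prod_one_add, Finset.powerset_univ]
    simp only [walsh, Finset.prod_mul_distrib]
  rw [hprod]
  split_ifs with h
  · subst h
    have h2 : ∀ b, 1 + sgn b * sgn b = 2 := by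
      intro b; cases b <;> norm_num [sgn]
    simp [h2]
  · obtain ⟨j, hj⟩ := Function.ne_iff.mp h
    refine Finset.prod_eq_zero (Finset.mem_univ j) ?_
    revert hj
    cases y j <;> cases x j <;> norm_num [sgn]

theorem sum_coeff_mul_walsh (f : (Fin n → Bool) → ℂ) (x : Fin n → Bool) :
    ∑ A : Finset (Fin n), coeff f A * walsh A x = f x := by
  simp only [coeff, div_mul_eq_mul_div, ← Finset.sum_div, Finset.sum_mul]
  rw [Finset.sum_comm, div_eq_iff (pow_ne_zero _ two_ne_zero)]
  simp only [mul_assoc, ← Finset.mul_sum, sum_walsh_mul_walsh]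
  simp

lemma pd_eq_sum (j : Fin n) (f : (Fin n → Bool) → ℂ) (x : Fin n → Bool) :
    pd j f x = ∑ A : Finset (Fin n), if j ∈ A then 2 * coeff f A * walsh A x else 0 := by
  rw [pd, ← sum_coeff_mul_walsh f x, ← sum_coeff_mul_walsh f (flip j x),
    ← Finset.sum_sub_distrib]
  refine Finset.sum_congr rfl fun A _ => ?_
  rw [walsh_flip]
  split_ifs <;> ring

noncomputable def fourierMult (c : Finset (Fin n) → ℝ) (f : (Fin n → Bool) → ℂ)
    (x : Fin n → Bool) : ℂ :=
  ∑ A : Finset (Fin n), (c A : ℂ) * coeff f A * walsh A x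

lemma sum_mul_fourierMult (c : Finset (Fin n) → ℝ) (f g : (Fin n → Bool) → ℂ) :
    ∑ x, g x * fourierMult c f x
      = ∑ A : Finset (Fin n), c A * (coeff f A * ∑ x, g x * walsh A x) := by
  simp only [fourierMult, Finset.mul_sum]
  rw [Finset.sum_comm]
  exact Finset.sum_congr rfl fun A _ => Finset.sum_congr rfl fun x _ => by ring

lemma re_sum_mul_fourierMult (c : Finset (Fin n) → ℝ) (f g : (Fin n → Bool) → ℂ) :
    (∑ x, g x * fourierMult c f x).re
      = ∑ A : Finset (Fin n), c A * (coeff f A * ∑ x, g x * walsh A x).re := by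
  simp [sum_mul_fourierMult, Complex.re_sum]

lemma sum_walsh_mul_conv (A : Finset (Fin n)) (c : (Fin n → Bool) → ℂ)
    (g : (Fin n → Bool) → ℂ) :
    ∑ y, walsh A y * ∑ δ, c δ * g (cubeMul y δ)
      = (∑ δ, c δ * walsh A δ) * ∑ z, g z * walsh A z := by
  have htranslate : ∀ δ, ∑ y, walsh A y * g (cubeMul y δ) = walsh A δ * ∑ z, g z * walsh A z := by
    intro δ
    rw [← sum_comp_cubeMul δ, Finset.mul_sum]
    refine Finset.sum_congr rfl fun z _ => ?_
    rw [cubeMul_cubeMul, walsh_cubeMul]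
    ring
  calc ∑ y, walsh A y * ∑ δ, c δ * g (cubeMul y δ)
      = ∑ δ, c δ * ∑ y, walsh A y * g (cubeMul y δ) := by
        simp only [Finset.mul_sum]
        rw [Finset.sum_comm]
        exact Finset.sum_congr rfl fun δ _ => Finset.sum_congr rfl fun y _ => by ring
    _ = (∑ δ, c δ * walsh A δ) * ∑ z, g z * walsh A z := by
        simp only [htranslate, Finset.sum_mul, mul_assoc]

end Walsh

section Biased

def rsgn (b : Bool) : ℝ := cond b 1 (-1)

lemma sgn_eq_ofReal_rsgn (b : Bool) : sgn b = (rsgn b : ℂ) := by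
  cases b <;> simp [sgn, rsgn]

/-- The law on `{-1,1}` with mean `ρ`. -/
noncomputable def bias (ρ : ℝ) (b : Bool) : ℝ := (1 + ρ * rsgn b) / 2

noncomputable def biasProd (ρ : ℝ) (δ : Fin n → Bool) : ℝ := ∏ j, bias ρ (δ j)

/-- The `j`-th coordinate of `δ`, centred and normalised to unit variance under `biasProd ρ`
when `s ^ 2 = 1 - ρ ^ 2`. -/
noncomputable def xi (s ρ : ℝ) (j : Fin n) (δ : Fin n → Bool) : ℝ := (rsgn (δ j) - ρ) / s

lemma biasProd_nonneg {ρ : ℝ} (hρ : |ρ| ≤ 1) (δ : Fin n → Bool) : 0 ≤ biasProd ρ δ := by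
  rw [abs_le] at hρ
  refine Finset.prod_nonneg fun j _ => ?_
  cases δ j <;> simp only [bias, rsgn, cond_true, cond_false] <;> linarith

lemma sum_bias_mul (ρ : ℝ) (F : Bool → ℝ) :
    ∑ b, bias ρ b * F b = (1 + ρ) / 2 * F true + (1 - ρ) / 2 * F false := by
  simp only [Fintype.sum_bool, bias, rsgn, cond_true, cond_false]
  ring

lemma sum_bias (ρ : ℝ) : ∑ b, bias ρ b = 1 := by
  simp only [Fintype.sum_bool, bias, rsgn, cond_true, cond_false]
  ring

lemma sum_biasProd_mul_prod (ρ : ℝ) (F : Fin n → Bool → ℝ) :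
    ∑ δ : Fin n → Bool, biasProd ρ δ * ∏ j, F j (δ j) = ∏ j, ∑ b, bias ρ b * F j b := by
  simp only [biasProd, ← Finset.prod_mul_distrib]
  exact (Fintype.prod_sum fun j b => bias ρ b * F j b).symm

lemma sum_biasProd (ρ : ℝ) : ∑ δ : Fin n → Bool, biasProd ρ δ = 1 := by
  simpa only [Finset.prod_const_one, mul_one, sum_bias] using
    sum_biasProd_mul_prod (n := n) ρ fun _ _ => 1

variable {s ρ : ℝ}

lemma sum_biasProd_mul_xi_mul_walsh (hs : s ^ 2 = 1 - ρ ^ 2) (hs0 : s ≠ 0) (j : Fin n)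
    (A : Finset (Fin n)) :
    ∑ δ, ((biasProd ρ δ * xi s ρ j δ : ℝ) : ℂ) * walsh A δ
      = if j ∈ A then ((s * ρ ^ (A.card - 1) : ℝ) : ℂ) else 0 := by
  have hfactor : ∀ δ : Fin n → Bool, xi s ρ j δ * ∏ i ∈ A, rsgn (δ i)
      = ∏ i, (if i = j then (rsgn (δ i) - ρ) / s else 1) * (if i ∈ A then rsgn (δ i) else 1) := by
    intro δ
    rw [Finset.prod_mul_distrib, Finset.prod_ite_eq', Finset.prod_ite_mem, Finset.univ_inter]
    simp [xi]
  have hcoord : ∀ i, ∑ b, bias ρ b *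
      ((if i = j then (rsgn b - ρ) / s else 1) * (if i ∈ A then rsgn b else 1))
      = (if i = j then (if j ∈ A then s else 0) else 1) * (if i ∈ A.erase j then ρ else 1) := by
    intro i
    rw [sum_bias_mul]
    by_cases hij : i = j
    · subst hij
      by_cases hiA : i ∈ A
      · simp only [hiA, if_true, Finset.notMem_erase, if_false, rsgn, cond_true, cond_false]
        field_simp
        linear_combination (-2) * hs
      · simp only [hiA, if_true, if_false, Finset.notMem_erase, rsgn, cond_true, cond_false]
        field_simp
        ring
    · by_cases hiA : i ∈ A
      · simp only [hij, hiA, if_true, if_false, Finset.mem_erase, ne_eq, not_false_eq_true,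
          and_self, rsgn, cond_true, cond_false]
        ring
      · simp only [hij, hiA, if_false, Finset.mem_erase, and_false]
        ring
  have hreal : ∑ δ, biasProd ρ δ * xi s ρ j δ * ∏ i ∈ A, rsgn (δ i)
      = if j ∈ A then s * ρ ^ (A.card - 1) else 0 := by
    rw [Finset.sum_congr rfl fun δ _ => by rw [mul_assoc, hfactor], sum_biasProd_mul_prod ρ
      fun i b => (if i = j then (rsgn b - ρ) / s else 1) * (if i ∈ A then rsgn b else 1)]
    simp only [hcoord, Finset.prod_mul_distrib, Finset.prod_ite_eq', Finset.mem_univ, if_true,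
      Finset.prod_ite_mem, Finset.univ_inter, Finset.prod_const]
    split_ifs with hjA
    · rw [Finset.card_erase_of_mem hjA]
    · rw [zero_mul]
  simp only [walsh, sgn_eq_ofReal_rsgn, ← Complex.ofReal_prod, ← Complex.ofReal_mul,
    ← Complex.ofReal_sum, hreal]
  split_ifs <;> simp

lemma sum_biasProd_mul_xi_mul_xi (hs : s ^ 2 = 1 - ρ ^ 2) (hs0 : s ≠ 0) (j k : Fin n) :
    ∑ δ, biasProd ρ δ * (xi s ρ j δ * xi s ρ k δ) = if j = k then 1 else 0 := by
  have hfactor : ∀ δ : Fin n → Bool, xi s ρ j δ * xi s ρ k δ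
      = ∏ i, (if i = j then (rsgn (δ i) - ρ) / s else 1)
          * (if i = k then (rsgn (δ i) - ρ) / s else 1) := by
    intro δ
    rw [Finset.prod_mul_distrib, Finset.prod_ite_eq', Finset.prod_ite_eq']
    simp [xi]
  have hcentred : ∑ b, bias ρ b * ((rsgn b - ρ) / s) = 0 := by
    simp only [sum_bias_mul, rsgn, cond_true, cond_false]
    field_simp
    ring
  have hvariance : ∑ b, bias ρ b * ((rsgn b - ρ) / s * ((rsgn b - ρ) / s)) = 1 := by
    simp only [sum_bias_mul, rsgn, cond_true, cond_false]
    field_simp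
    linear_combination (-2) * hs
  simp only [hfactor]
  rw [sum_biasProd_mul_prod ρ fun i b =>
    (if i = j then (rsgn b - ρ) / s else 1) * (if i = k then (rsgn b - ρ) / s else 1)]
  split_ifs with hjk
  · subst hjk
    refine Finset.prod_eq_one fun i _ => ?_
    by_cases hij : i = j
    · simpa only [hij, if_true] using hvariance
    · simpa only [hij, if_false, mul_one] using sum_bias ρ
  · refine Finset.prod_eq_zero (Finset.mem_univ j) ?_
    simpa only [if_true, hjk, if_false, mul_one] using hcentred

end Biased

section Pairing

variable {s ρ : ℝ}

/-- The operator `-(d/dθ) cos^{Δ/4}θ` written with `s = sin θ`, `ρ = cos θ`. -/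
noncomputable def derivMult (s ρ : ℝ) : ((Fin n → Bool) → ℂ) → (Fin n → Bool) → ℂ :=
  fourierMult fun A => A.card * s * ρ ^ (A.card - 1)

noncomputable def xiConv (s ρ : ℝ) (j : Fin n) (g : (Fin n → Bool) → ℂ)
    (y : Fin n → Bool) : ℂ :=
  ∑ δ, ((biasProd ρ δ * xi s ρ j δ : ℝ) : ℂ) * g (cubeMul y δ)

lemma sum_pd_mul_xiConv (hs : s ^ 2 = 1 - ρ ^ 2) (hs0 : s ≠ 0) (j : Fin n)
    (f g : (Fin n → Bool) → ℂ) :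
    ∑ y, pd j f y / 2 * xiConv s ρ j g y
      = ∑ A : Finset (Fin n),
          if j ∈ A then (s * ρ ^ (A.card - 1) : ℝ) * (coeff f A * ∑ z, g z * walsh A z) else 0 := by
  have hpd : ∀ y,
      pd j f y / 2 = ∑ A : Finset (Fin n), if j ∈ A then coeff f A * walsh A y else 0 := by
    intro y
    rw [pd_eq_sum, Finset.sum_div]
    refine Finset.sum_congr rfl fun A _ => ?_
    split_ifs <;> ring
  simp only [hpd, Finset.sum_mul]
  rw [Finset.sum_comm]
  refine Finset.sum_congr rfl fun A _ => ?_
  split_ifs with hjA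
  · simp only [mul_assoc, ← Finset.mul_sum, xiConv, sum_walsh_mul_conv,
      sum_biasProd_mul_xi_mul_walsh hs hs0, if_pos hjA]
    ring
  · simp

theorem sum_mul_derivMult (hs : s ^ 2 = 1 - ρ ^ 2) (hs0 : s ≠ 0) (f g : (Fin n → Bool) → ℂ) :
    ∑ x, g x * derivMult s ρ f x = ∑ y, ∑ j, pd j f y / 2 * xiConv s ρ j g y := by
  rw [Finset.sum_comm]
  simp only [sum_pd_mul_xiConv hs hs0]
  rw [Finset.sum_comm, derivMult, sum_mul_fourierMult]
  refine Finset.sum_congr rfl fun A _ => ?_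
  rw [Finset.sum_ite_mem, Finset.univ_inter, Finset.sum_const, nsmul_eq_mul]
  push_cast
  ring

noncomputable def noiseL2 (ρ : ℝ) (g : (Fin n → Bool) → ℂ) (y : Fin n → Bool) : ℝ :=
  √(∑ δ, biasProd ρ δ * ‖g (cubeMul y δ)‖ ^ 2)

lemma gradLen_nonneg (f : (Fin n → Bool) → ℂ) (y : Fin n → Bool) : 0 ≤ gradLen f y :=
  Real.sqrt_nonneg _

lemma abs_le_one_of_sq_eq (hs : s ^ 2 = 1 - ρ ^ 2) : |ρ| ≤ 1 :=
  (sq_le_one_iff_abs_le_one ρ).mp (by nlinarith [sq_nonneg s])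

theorem norm_sum_mul_derivMult_le (hs : s ^ 2 = 1 - ρ ^ 2) (hs0 : s ≠ 0)
    (f g : (Fin n → Bool) → ℂ) :
    ‖∑ x, g x * derivMult s ρ f x‖ ≤ 1 / 2 * ∑ y, gradLen f y * noiseL2 ρ g y := by
  rw [sum_mul_derivMult hs hs0, Finset.mul_sum]
  refine (norm_sum_le _ _).trans (Finset.sum_le_sum fun y _ => ?_)
  have hbessel : ∑ j, ‖xiConv s ρ j g y‖ ^ 2 ≤ noiseL2 ρ g y ^ 2 := by
    rw [noiseL2, Real.sq_sqrt (Finset.sum_nonneg fun δ _ =>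
      mul_nonneg (biasProd_nonneg (abs_le_one_of_sq_eq hs) δ) (sq_nonneg _))]
    exact sum_norm_sq_weighted_le (biasProd ρ) (biasProd_nonneg (abs_le_one_of_sq_eq hs)) (xi s ρ)
      (sum_biasProd_mul_xi_mul_xi hs hs0) fun δ => g (cubeMul y δ)
  calc ‖∑ j, pd j f y / 2 * xiConv s ρ j g y‖
      ≤ 1 / 2 * ∑ j, ‖pd j f y‖ * ‖xiConv s ρ j g y‖ := by
        refine (norm_sum_le _ _).trans_eq ?_
        simp only [Finset.mul_sum, norm_mul, norm_div, Complex.norm_two]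
        exact Finset.sum_congr rfl fun j _ => by ring
    _ ≤ 1 / 2 * (gradLen f y * noiseL2 ρ g y) := by
        gcongr
        refine (Real.sum_mul_le_sqrt_mul_sqrt _ _ _).trans ?_
        exact mul_le_mul_of_nonneg_left ((Real.sqrt_le_left (Real.sqrt_nonneg _)).mpr hbessel)
          (Real.sqrt_nonneg _)

lemma noiseL2_nonneg (ρ : ℝ) (g : (Fin n → Bool) → ℂ) (y : Fin n → Bool) : 0 ≤ noiseL2 ρ g y :=
  Real.sqrt_nonneg _

lemma noiseL2_le_one (hρ : |ρ| ≤ 1) {g : (Fin n → Bool) → ℂ} (hg : ∀ x, ‖g x‖ ≤ 1)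
    (y : Fin n → Bool) : noiseL2 ρ g y ≤ 1 := by
  refine Real.sqrt_le_one.mpr ((Finset.sum_le_sum fun δ _ => ?_).trans (sum_biasProd ρ).le)
  exact mul_le_of_le_one_right (biasProd_nonneg hρ δ) (pow_le_one₀ (norm_nonneg _) (hg _))

/-- Jensen's inequality for `t ↦ t ^ (q / 2)`, then translation invariance of the sum. -/
lemma sum_noiseL2_rpow_le (hρ : |ρ| ≤ 1) (g : (Fin n → Bool) → ℂ) {q : ℝ} (hq : 2 ≤ q) :
    ∑ y, noiseL2 ρ g y ^ q ≤ ∑ x, ‖g x‖ ^ q := by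
  have hsq_rpow : ∀ a : ℝ, 0 ≤ a → (a ^ 2) ^ (q / 2) = a ^ q := fun a ha => by
    rw [← Real.rpow_natCast, ← Real.rpow_mul ha]
    ring_nf
  calc ∑ y, noiseL2 ρ g y ^ q
      = ∑ y, (∑ δ, biasProd ρ δ * ‖g (cubeMul y δ)‖ ^ 2) ^ (q / 2) := by
        refine Finset.sum_congr rfl fun y _ => ?_
        rw [noiseL2, Real.sqrt_eq_rpow, ← Real.rpow_mul (Finset.sum_nonneg fun δ _ =>
          mul_nonneg (biasProd_nonneg hρ δ) (sq_nonneg _))]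
        ring_nf
    _ ≤ ∑ y, ∑ δ, biasProd ρ δ * ‖g (cubeMul y δ)‖ ^ q := by
        refine Finset.sum_le_sum fun y _ => ?_
        simp only [← hsq_rpow _ (norm_nonneg _)]
        exact Real.rpow_arith_mean_le_arith_mean_rpow _ _ _ (fun δ _ => biasProd_nonneg hρ δ)
          (sum_biasProd ρ) (fun δ _ => sq_nonneg _) (by linarith)
    _ = ∑ x, ‖g x‖ ^ q := by
        rw [Finset.sum_comm]
        simp only [← Finset.mul_sum, sum_comp_cubeMul _ fun x => ‖g x‖ ^ q, ← Finset.sum_mul,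
          sum_biasProd, one_mul]

theorem norm_sum_mul_derivMult_le_of_holderConjugate (hs : s ^ 2 = 1 - ρ ^ 2) (hs0 : s ≠ 0)
    (f g : (Fin n → Bool) → ℂ) {p q : ℝ} (hpq : p.HolderConjugate q) (hq : 2 ≤ q) :
    ‖∑ x, g x * derivMult s ρ f x‖
      ≤ 1 / 2 * ((∑ y, gradLen f y ^ p) ^ (1 / p) * (∑ x, ‖g x‖ ^ q) ^ (1 / q)) := by
  refine (norm_sum_mul_derivMult_le hs hs0 f g).trans (mul_le_mul_of_nonneg_left ?_ (by norm_num))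
  refine (Real.inner_le_Lp_mul_Lq_of_nonneg _ hpq (fun y _ => gradLen_nonneg f y)
    (fun y _ => noiseL2_nonneg ρ g y)).trans ?_
  refine mul_le_mul_of_nonneg_left ?_ (Real.rpow_nonneg
    (Finset.sum_nonneg fun y _ => Real.rpow_nonneg (gradLen_nonneg f y) _) _)
  exact Real.rpow_le_rpow (Finset.sum_nonneg fun y _ => Real.rpow_nonneg (noiseL2_nonneg ρ g y) _)
    (sum_noiseL2_rpow_le (abs_le_one_of_sq_eq hs) g hq) hpq.symm.one_div_nonneg

theorem norm_sum_mul_derivMult_le_of_norm_le_one (hs : s ^ 2 = 1 - ρ ^ 2) (hs0 : s ≠ 0)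
    (f : (Fin n → Bool) → ℂ) {g : (Fin n → Bool) → ℂ} (hg : ∀ x, ‖g x‖ ≤ 1) :
    ‖∑ x, g x * derivMult s ρ f x‖ ≤ 1 / 2 * ∑ y, gradLen f y := by
  refine (norm_sum_mul_derivMult_le hs hs0 f g).trans (mul_le_mul_of_nonneg_left ?_ (by norm_num))
  exact Finset.sum_le_sum fun y _ =>
    mul_le_of_le_one_right (gradLen_nonneg f y) (noiseL2_le_one (abs_le_one_of_sq_eq hs) hg y)

end Pairing

lemma cLp_le_mul_rLp {p : ℝ} {h : (Fin n → Bool) → ℂ} {u : (Fin n → Bool) → ℝ}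
    (hu : ∀ x, 0 ≤ u x) {c : ℝ}
    (H : (∑ x, ‖h x‖ ^ p) ^ (1 / p) ≤ c * (∑ x, u x ^ p) ^ (1 / p)) :
    cLp p h ≤ c * rLp p u := by
  have hN : (0 : ℝ) < 2 ^ n := by positivity
  simp only [cLp, rLp, abs_of_nonneg (hu _)]
  rw [div_rpow (Finset.sum_nonneg fun x _ => rpow_nonneg (norm_nonneg _) _) hN.le,
    div_rpow (Finset.sum_nonneg fun x _ => rpow_nonneg (hu x) _) hN.le, ← mul_div_assoc]
  exact div_le_div_of_nonneg_right H (rpow_nonneg hN.le _)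

section Subordination

open MeasureTheory Set

variable {θ α : ℝ}

lemma cos_pos_of_mem_Ioo_zero_pi_div_two (hθ : θ ∈ Ioo 0 (π / 2)) : 0 < cos θ :=
  cos_pos_of_mem_Ioo ⟨by linarith [hθ.1, pi_pos], hθ.2⟩

lemma sin_ne_zero_of_mem_Ioo_zero_pi_div_two (hθ : θ ∈ Ioo 0 (π / 2)) : sin θ ≠ 0 :=
  (sin_pos_of_pos_of_lt_pi hθ.1 (by linarith [hθ.2, pi_pos])).ne'

lemma neg_log_cos_pos (hθ : θ ∈ Ioo 0 (π / 2)) : 0 < -log (cos θ) := by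
  have hcos : 0 < cos θ := cos_pos_of_mem_Ioo_zero_pi_div_two hθ
  have hcos1 : cos θ < 1 := by
    simpa using cos_lt_cos_of_nonneg_of_le_pi le_rfl (by linarith [hθ.2, pi_pos]) hθ.1
  exact neg_pos.2 (log_neg hcos hcos1)

lemma integrableOn_neg_log_cos_rpow (hα0 : 0 < α) (hα1 : α < 1 / 2) :
    IntegrableOn (fun θ => (-log (cos θ)) ^ (-α)) (Ioo 0 (π / 2)) := by
  have hdom : IntegrableOn (fun θ : ℝ => (2 / π ^ 2) ^ (-α) * θ ^ (-(2 * α))) (Ioo 0 (π / 2)) :=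
    ((intervalIntegrable_iff_integrableOn_Ioo_of_le (by positivity)).mp
      (intervalIntegral.intervalIntegrable_rpow' (by linarith))).const_mul _
  have hcont : ContinuousOn (fun θ => (-log (cos θ)) ^ (-α)) (Ioo 0 (π / 2)) :=
    ((continuousOn_log.comp continuous_cos.continuousOn fun θ hθ =>
      (cos_pos_of_mem_Ioo_zero_pi_div_two hθ).ne').neg).rpow_const
      fun θ hθ => Or.inl (neg_log_cos_pos hθ).ne'
  refine hdom.mono' (hcont.aestronglyMeasurable measurableSet_Ioo)
    ((ae_restrict_iff' measurableSet_Ioo).2 (Filter.Eventually.of_forall fun θ hθ => ?_))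
  -- `1 - cos θ ≥ 2 θ² / π²` makes the integrand `O(θ ^ (-2α))` at `0`
  have hlower : 2 / π ^ 2 * θ ^ 2 ≤ -log (cos θ) := by
    have hcos : cos θ ≤ 1 - 2 / π ^ 2 * θ ^ 2 :=
      cos_le_one_sub_mul_cos_sq (by rw [abs_of_pos hθ.1]; linarith [hθ.2, pi_pos])
    linarith [log_le_sub_one_of_pos (cos_pos_of_mem_Ioo_zero_pi_div_two hθ)]
  rw [Real.norm_of_nonneg (rpow_nonneg (neg_log_cos_pos hθ).le _)]
  calc (-log (cos θ)) ^ (-α) ≤ (2 / π ^ 2 * θ ^ 2) ^ (-α) :=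
        rpow_le_rpow_of_nonpos (by have := hθ.1; positivity) hlower (by linarith)
    _ = (2 / π ^ 2) ^ (-α) * θ ^ (-(2 * α)) := by
        rw [mul_rpow (by positivity) (sq_nonneg θ), ← rpow_natCast θ 2, ← rpow_mul hθ.1.le]
        norm_num

lemma hasDerivWithinAt_neg_log_cos (hθ : θ ∈ Ioo 0 (π / 2)) :
    HasDerivWithinAt (fun t => -log (cos t)) (sin θ / cos θ) (Ioo 0 (π / 2)) θ := by
  have hcos : cos θ ≠ 0 := (cos_pos_of_mem_Ioo_zero_pi_div_two hθ).ne'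
  have h := ((hasDerivAt_cos θ).log hcos).neg
  rw [show -(-sin θ / cos θ) = sin θ / cos θ by ring] at h
  exact h.hasDerivWithinAt

lemma injOn_neg_log_cos : InjOn (fun t => -log (cos t)) (Ioo 0 (π / 2)) := by
  refine StrictMonoOn.injOn fun a ha b hb hab => neg_lt_neg (log_lt_log ?_ ?_)
  · exact cos_pos_of_mem_Ioo_zero_pi_div_two hb
  · exact cos_lt_cos_of_nonneg_of_le_pi ha.1.le (by linarith [hb.2, pi_pos]) hab

lemma image_neg_log_cos : (fun t => -log (cos t)) '' Ioo 0 (π / 2) = Ioi (0 : ℝ) := by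
  refine Subset.antisymm (image_subset_iff.2 fun θ hθ => neg_log_cos_pos hθ) fun t ht => ?_
  have he1 : exp (-t) < 1 := exp_lt_one_iff.2 (neg_lt_zero.2 ht)
  refine ⟨arccos (exp (-t)), ⟨arccos_pos.2 he1, arccos_lt_pi_div_two.2 (exp_pos _)⟩, ?_⟩
  simp [cos_arccos (by linarith [exp_pos (-t)]) he1.le]

/-- After `t = -log cos θ`, the kernel becomes `k t ^ (-α) e ^ (-k t) dt`. -/
lemma neg_log_cos_rpow_mul_eq_smul {k : ℕ} (hk : 1 ≤ k) (hθ : θ ∈ Ioo 0 (π / 2)) :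
    (-log (cos θ)) ^ (-α) * (k * sin θ * cos θ ^ (k - 1))
      = |sin θ / cos θ| • (k * ((-log (cos θ)) ^ (-α) * exp (-(k * -log (cos θ))))) := by
  have hcos : 0 < cos θ := cos_pos_of_mem_Ioo_zero_pi_div_two hθ
  have hsin : 0 ≤ sin θ := sin_nonneg_of_nonneg_of_le_pi hθ.1.le (by linarith [hθ.2, pi_pos])
  have hexp : exp (-(k * -log (cos θ))) = cos θ ^ (k - 1) * cos θ := by
    rw [← pow_succ, Nat.sub_add_cancel hk, mul_neg, neg_neg, exp_nat_mul, exp_log hcos]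
  rw [smul_eq_mul, hexp, abs_of_nonneg (div_nonneg hsin hcos.le)]
  field_simp

lemma integrableOn_kernel (hα1 : α < 1) (k : ℕ) :
    IntegrableOn (fun θ => (-log (cos θ)) ^ (-α) * (k * sin θ * cos θ ^ (k - 1)))
      (Ioo 0 (π / 2)) := by
  rcases Nat.eq_zero_or_pos k with rfl | hk
  · simp
  have hG : IntegrableOn (fun t : ℝ => k * (t ^ (-α) * exp (-(k * t)))) (Ioi (0 : ℝ)) :=
    IntegrableOn.congr_fun ((integrableOn_rpow_mul_exp_neg_mul_rpow (s := -α) (by linarith)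
      one_pos (Nat.cast_pos.2 hk)).const_mul (k : ℝ)) (fun t _ => by simp) measurableSet_Ioi
  rw [← image_neg_log_cos, integrableOn_image_iff_integrableOn_abs_deriv_smul measurableSet_Ioo
    (fun θ hθ => hasDerivWithinAt_neg_log_cos hθ) injOn_neg_log_cos] at hG
  exact hG.congr_fun (fun θ hθ => (neg_log_cos_rpow_mul_eq_smul hk hθ).symm) measurableSet_Ioo

lemma integral_kernel (hα1 : α < 1) {k : ℕ} (hk : 1 ≤ k) :
    ∫ θ in Ioo 0 (π / 2), (-log (cos θ)) ^ (-α) * (k * sin θ * cos θ ^ (k - 1))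
      = Gamma (1 - α) * k ^ α := by
  have hk0 : (0 : ℝ) < k := Nat.cast_pos.2 hk
  have hsubst := integral_image_eq_integral_abs_deriv_smul measurableSet_Ioo
    (fun θ hθ => hasDerivWithinAt_neg_log_cos hθ) injOn_neg_log_cos
    fun t => k * (t ^ (-α) * exp (-(k * t)))
  rw [image_neg_log_cos] at hsubst
  rw [setIntegral_congr_fun measurableSet_Ioo fun θ hθ => neg_log_cos_rpow_mul_eq_smul hk hθ,
    ← hsubst, integral_const_mul]
  have hΓ := integral_rpow_mul_exp_neg_mul_Ioi (by linarith : (0 : ℝ) < 1 - α) hk0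
  rw [show 1 - α - 1 = -α by ring] at hΓ
  have hpow : (k : ℝ) * k ^ (-(1 - α)) = k ^ α := by
    rw [mul_comm, ← rpow_add_one hk0.ne']
    ring_nf
  rw [hΓ, one_div, inv_rpow hk0.le, ← rpow_neg hk0.le, ← mul_assoc, hpow, mul_comm]

lemma four_mul_rpow_eq_integral (hα0 : 0 < α) (hα1 : α < 1) (k : ℕ) :
    (4 * k : ℝ) ^ α = 4 ^ α / Gamma (1 - α)
      * ∫ θ in Ioo 0 (π / 2), (-log (cos θ)) ^ (-α) * (k * sin θ * cos θ ^ (k - 1)) := by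
  rcases Nat.eq_zero_or_pos k with rfl | hk
  · simp [zero_rpow hα0.ne']
  have hΓ : Gamma (1 - α) ≠ 0 := (Gamma_pos_of_pos (by linarith)).ne'
  rw [integral_kernel hα1 hk, mul_rpow (by norm_num) (Nat.cast_nonneg _)]
  field_simp

lemma integral_neg_log_cos_rpow (hα1 : α < 1) :
    ∫ θ in Ioo 0 (π / 2), (-log (cos θ)) ^ (-α) = Gamma (1 - α) * Kconst α := by
  have hΓ : Gamma (1 - α) ≠ 0 := (Gamma_pos_of_pos (by linarith)).ne'
  rw [Kconst, intervalIntegral.integral_of_le (by positivity), integral_Ioc_eq_integral_Ioo]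
  field_simp

lemma Kconst_nonneg (hα1 : α < 1) : 0 ≤ Kconst α := by
  have hΓ : 0 < Gamma (1 - α) := Gamma_pos_of_pos (by linarith)
  have hint := integral_neg_log_cos_rpow hα1
  have hnonneg : 0 ≤ ∫ θ in Ioo 0 (π / 2), (-log (cos θ)) ^ (-α) :=
    setIntegral_nonneg measurableSet_Ioo fun θ hθ => rpow_nonneg (neg_log_cos_pos hθ).le _
  nlinarith

lemma neg_log_cos_rpow_mul_re_sum_mul_derivMult (θ : ℝ) (f g : (Fin n → Bool) → ℂ) :
    (-log (cos θ)) ^ (-α) * (∑ x, g x * derivMult (sin θ) (cos θ) f x).re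
      = ∑ A : Finset (Fin n), (-log (cos θ)) ^ (-α) * (A.card * sin θ * cos θ ^ (A.card - 1))
          * (coeff f A * ∑ x, g x * walsh A x).re := by
  rw [derivMult, re_sum_mul_fourierMult, Finset.mul_sum]
  exact Finset.sum_congr rfl fun A _ => by ring

lemma integrableOn_neg_log_cos_rpow_mul_re_sum_mul_derivMult (hα1 : α < 1)
    (f g : (Fin n → Bool) → ℂ) :
    IntegrableOn (fun θ => (-log (cos θ)) ^ (-α) * (∑ x, g x * derivMult (sin θ) (cos θ) f x).re)
      (Ioo 0 (π / 2)) := by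
  simp only [neg_log_cos_rpow_mul_re_sum_mul_derivMult]
  exact integrable_finsetSum _ fun A _ => (integrableOn_kernel hα1 A.card).mul_const _

/-- Subordination of `Δ^α` to the semigroup `cos^{Δ/4}θ`. -/
theorem re_sum_mul_deltaPow_eq_integral (hα0 : 0 < α) (hα1 : α < 1) (f g : (Fin n → Bool) → ℂ) :
    (∑ x, g x * deltaPow α f x).re = 4 ^ α / Gamma (1 - α)
      * ∫ θ in Ioo 0 (π / 2),
          (-log (cos θ)) ^ (-α) * (∑ x, g x * derivMult (sin θ) (cos θ) f x).re := by
  simp only [neg_log_cos_rpow_mul_re_sum_mul_derivMult]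
  rw [show deltaPow α f = fourierMult (fun A => (4 * A.card : ℝ) ^ α) f from rfl,
    re_sum_mul_fourierMult, integral_finsetSum _ fun A _ =>
      (integrableOn_kernel hα1 A.card).mul_const _, Finset.mul_sum]
  refine Finset.sum_congr rfl fun A _ => ?_
  rw [integral_mul_const, four_mul_rpow_eq_integral hα0 hα1, mul_assoc]

theorem re_sum_mul_deltaPow_le (hα0 : 0 < α) (hα1 : α < 1 / 2) (f g : (Fin n → Bool) → ℂ)
    {C : ℝ} (hC : ∀ θ ∈ Ioo 0 (π / 2), ‖∑ x, g x * derivMult (sin θ) (cos θ) f x‖ ≤ C) :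
    (∑ x, g x * deltaPow α f x).re ≤ 4 ^ α * Kconst α * C := by
  have hΓ : 0 < Gamma (1 - α) := Gamma_pos_of_pos (by linarith)
  have hmono : ∫ θ in Ioo 0 (π / 2),
        (-log (cos θ)) ^ (-α) * (∑ x, g x * derivMult (sin θ) (cos θ) f x).re
      ≤ ∫ θ in Ioo 0 (π / 2), (-log (cos θ)) ^ (-α) * C :=
    setIntegral_mono_on (integrableOn_neg_log_cos_rpow_mul_re_sum_mul_derivMult (by linarith) f g)
      ((integrableOn_neg_log_cos_rpow hα0 hα1).mul_const C) measurableSet_Ioo fun θ hθ =>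
        mul_le_mul_of_nonneg_left ((Complex.re_le_norm _).trans (hC θ hθ))
          (rpow_nonneg (neg_log_cos_pos hθ).le _)
  rw [integral_mul_const, integral_neg_log_cos_rpow (by linarith)] at hmono
  rw [re_sum_mul_deltaPow_eq_integral hα0 (by linarith)]
  calc 4 ^ α / Gamma (1 - α) * ∫ θ in Ioo 0 (π / 2),
        (-log (cos θ)) ^ (-α) * (∑ x, g x * derivMult (sin θ) (cos θ) f x).re
      ≤ 4 ^ α / Gamma (1 - α) * (Gamma (1 - α) * Kconst α * C) := by gcongr
    _ = 4 ^ α * Kconst α * C := by field_simp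

theorem rpow_sum_norm_deltaPow_rpow_le {p : ℝ} (hp1 : 1 ≤ p) (hp2 : p ≤ 2)
    (hα0 : 0 < α) (hα1 : α < 1 / 2) (f : (Fin n → Bool) → ℂ) :
    (∑ x, ‖deltaPow α f x‖ ^ p) ^ (1 / p)
      ≤ 4 ^ α / 2 * Kconst α * (∑ y, gradLen f y ^ p) ^ (1 / p) := by
  have hK := Kconst_nonneg (α := α) (by linarith)
  rcases hp1.eq_or_lt with rfl | hp1
  · simp only [rpow_one, div_one]
    refine sum_norm_le_of_forall_re_sum_mul_le _ fun g hg => ?_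
    refine (re_sum_mul_deltaPow_le hα0 hα1 f g (C := 1 / 2 * ∑ y, gradLen f y)
      fun θ hθ => ?_).trans_eq (by ring)
    exact norm_sum_mul_derivMult_le_of_norm_le_one (sin_sq θ)
      (sin_ne_zero_of_mem_Ioo_zero_pi_div_two hθ) f hg
  · have hpq : p.HolderConjugate p.conjExponent := .conjExponent hp1
    have hq : 2 ≤ p.conjExponent := by
      rw [Real.conjExponent, le_div_iff₀ (by linarith)]
      linarith
    have hG : 0 ≤ (∑ y, gradLen f y ^ p) ^ (1 / p) :=
      rpow_nonneg (Finset.sum_nonneg fun y _ => rpow_nonneg (gradLen_nonneg f y) _) _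
    refine rpow_sum_norm_rpow_le_of_forall_re_sum_mul_le hpq _ (by positivity) fun g => ?_
    refine (re_sum_mul_deltaPow_le hα0 hα1 f g (C := 1 / 2 * ((∑ y, gradLen f y ^ p) ^ (1 / p)
      * (∑ x, ‖g x‖ ^ p.conjExponent) ^ (1 / p.conjExponent))) fun θ hθ => ?_).trans_eq (by ring)
    exact norm_sum_mul_derivMult_le_of_holderConjugate (sin_sq θ)
      (sin_ne_zero_of_mem_Ioo_zero_pi_div_two hθ) f g hpq hq

end Subordination

end DiscreteCube

open DiscreteCube

theorem cube_fractional_laplacian_poincare_general (n : ℕ) (p : ℝ)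
    (hp1 : 1 ≤ p) (hp2 : p ≤ 2) (α : ℝ) (hα0 : 0 < α) (hα1 : α < 1 / 2)
    (f : (Fin n → Bool) → ℂ) :
    cLp p (deltaPow α f) ≤ Kconst α * rLp p (gradLen f) := by
  have hK : 0 ≤ Kconst α := Kconst_nonneg (by linarith)
  have hfour : (4 : ℝ) ^ α / 2 ≤ 1 := by
    have hsqrt : (4 : ℝ) ^ (1 / 2 : ℝ) = 2 := by
      rw [show (4 : ℝ) = 2 ^ (2 : ℝ) by norm_num, ← Real.rpow_mul (by norm_num)]
      norm_num
    linarith [Real.rpow_le_rpow_of_exponent_le (by norm_num : (1 : ℝ) ≤ 4) hα1.le]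
  have hrLp : 0 ≤ rLp p (gradLen f) := Real.rpow_nonneg (by positivity) _
  calc cLp p (deltaPow α f) ≤ 4 ^ α / 2 * Kconst α * rLp p (gradLen f) :=
        cLp_le_mul_rLp (gradLen_nonneg f) (rpow_sum_norm_deltaPow_rpow_le hp1 hp2 hα0 hα1 f)
    _ ≤ Kconst α * rLp p (gradLen f) := by gcongr; exact mul_le_of_le_one_left hK hfour

/-- For every `n ≥ 1`, `1 ≤ p ≤ 2`, `0 < α < 1/2` and `f : Ω_n → ℂ`,
`‖Δ^α f‖_p ≤ K_α ‖ |∇f| ‖_p` where `K_α = (1/Γ(1−α)) ∫_0^{π/2} (−log cos θ)^{−α} dθ`. -/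
theorem cube_fractional_laplacian_poincare (n : ℕ) (hn : 1 ≤ n) (p : ℝ)
    (hp1 : 1 ≤ p) (hp2 : p ≤ 2) (α : ℝ) (hα0 : 0 < α) (hα1 : α < 1 / 2)
    (f : (Fin n → Bool) → ℂ) :
    cLp p (deltaPow α f) ≤ Kconst α * rLp p (gradLen f) :=
  cube_fractional_laplacian_poincare_general n p hp1 hp2 α hα0 hα1 f
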